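/- Let Ω ⊂ ℝ² be a bounded open set with Lebesgue measure |Ω|, let 0 ≤ β ≤ 1/2 and 0 < λ₁ ≤ λ₂ be constants, and let g : [0,∞) → ℝ satisfy λ₁ ≤ g(s) ≤ λ₂(1+s)^β for all s ≥ 0. Let u : Ω → [0,∞) be measurable with ∫_Ω u = m < ∞, and let v : Ω → ℝ be differentiable with v, ‖∇v‖ ∈ L²(Ω), g(u)·v integrable, satisfying the integral identity ∫_Ω ‖∇v‖² + ∫_Ω v² = ∫_Ω g(u)·v. Then ∫_Ω ‖∇v‖² ≤ (λ₂²/4)(|Ω| + m). -/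

import Mathlib

open MeasureTheory

/-! Testing the equation against `v` gives `∫ ‖∇v‖² = ∫ (g(u) v - v²)`, and by Young's inequality
`g(u) v - v² ≤ g(u)² / 4 ≤ λ₂² (1 + u)^{2β} / 4 ≤ λ₂² (1 + u) / 4`, using `2β ≤ 1` and `1 + u ≥ 1`.
Integrating the last bound over `Ω` gives `(λ₂² / 4)(|Ω| + m)`. -/

lemma mul_sub_sq_le_sq_div_four (a b : ℝ) : a * b - b ^ 2 ≤ a ^ 2 / 4 := by
  nlinarith [sq_nonneg (a - 2 * b)]

lemma rpow_sq_le_self {x β : ℝ} (hx : 1 ≤ x) (hβ : β ≤ 1 / 2) : (x ^ β) ^ 2 ≤ x := by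
  calc (x ^ β) ^ 2 = x ^ (β * 2) := by
        rw [← Real.rpow_natCast, ← Real.rpow_mul (by linarith)]
        norm_num
    _ ≤ x ^ (1 : ℝ) := Real.rpow_le_rpow_of_exponent_le hx (by linarith)
    _ = x := Real.rpow_one x

lemma sq_le_of_le_mul_one_add_rpow {a c s β : ℝ} (ha : 0 ≤ a) (hs : 0 ≤ s) (hβ : β ≤ 1 / 2)
    (hac : a ≤ c * (1 + s) ^ β) : a ^ 2 ≤ c ^ 2 * (1 + s) :=
  calc a ^ 2 ≤ (c * (1 + s) ^ β) ^ 2 := pow_le_pow_left₀ ha hac 2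
    _ = c ^ 2 * ((1 + s) ^ β) ^ 2 := by ring
    _ ≤ c ^ 2 * (1 + s) := by gcongr; exact rpow_sq_le_self (by linarith) hβ

lemma setIntegral_one_add {α : Type*} [MeasurableSpace α] {μ : Measure α} {s : Set α}
    (hs : μ s ≠ ⊤) {u : α → ℝ} (hu : IntegrableOn u s μ) :
    ∫ x in s, (1 + u x) ∂μ = μ.real s + ∫ x in s, u x ∂μ := by
  rw [integral_add (integrableOn_const (C := (1 : ℝ)) hs) hu]
  simp

lemma setIntegral_mul_sub_sq_le {α : Type*} [MeasurableSpace α] {μ : Measure α} {s : Set α}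
    (hs : μ s ≠ ⊤) {G v u : α → ℝ} {c : ℝ} (hGv : IntegrableOn (fun x => G x * v x) s μ)
    (hv : IntegrableOn (fun x => v x ^ 2) s μ) (hu : IntegrableOn u s μ)
    (hG : ∀ x, G x ^ 2 ≤ c * (1 + u x)) :
    (∫ x in s, G x * v x ∂μ) - ∫ x in s, v x ^ 2 ∂μ ≤ c / 4 * (μ.real s + ∫ x in s, u x ∂μ) := by
  have hbound : ∀ x, G x * v x - v x ^ 2 ≤ c / 4 * (1 + u x) := fun x => by
    linarith [mul_sub_sq_le_sq_div_four (G x) (v x), hG x]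
  rw [← integral_sub hGv hv, ← setIntegral_one_add hs hu, ← integral_const_mul]
  exact setIntegral_mono (hGv.sub hv) (((integrableOn_const (C := (1 : ℝ)) hs).add hu).const_mul _) hbound

theorem stmt_10_general (Ω : Set (EuclideanSpace ℝ (Fin 2)))
    (hΩb : Bornology.IsBounded Ω)
    (β lam₁ lam₂ : ℝ) (hβ : β ≤ 1 / 2)
    (hlam₁ : 0 < lam₁)
    (g : ℝ → ℝ) (hg : ∀ s : ℝ, 0 ≤ s → lam₁ ≤ g s ∧ g s ≤ lam₂ * (1 + s) ^ β)
    (u : EuclideanSpace ℝ (Fin 2) → ℝ) (hu0 : ∀ x, 0 ≤ u x)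
    (hui : IntegrableOn u Ω)
    (m : ℝ) (hm : ∫ x in Ω, u x = m)
    (v : EuclideanSpace ℝ (Fin 2) → ℝ)
    (hv2 : IntegrableOn (fun x => (v x) ^ 2) Ω)
    (hgv : IntegrableOn (fun x => g (u x) * v x) Ω)
    (hid : (∫ x in Ω, ‖fderiv ℝ v x‖ ^ 2) + ∫ x in Ω, (v x) ^ 2
            = ∫ x in Ω, g (u x) * v x) :
    ∫ x in Ω, ‖fderiv ℝ v x‖ ^ 2 ≤ (lam₂ ^ 2 / 4) * ((volume Ω).toReal + m) := by
  have hgu_sq : ∀ x, g (u x) ^ 2 ≤ lam₂ ^ 2 * (1 + u x) := fun x => by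
    obtain ⟨hlow, hup⟩ := hg (u x) (hu0 x)
    exact sq_le_of_le_mul_one_add_rpow (by linarith) (hu0 x) hβ hup
  have hbound := setIntegral_mul_sub_sq_le hΩb.measure_lt_top.ne hgv hv2 hui hgu_sq
  rw [hm, measureReal_def] at hbound
  linarith

/-- Lemma 5.1: if `v` satisfies the weak identity
`∫_Ω ‖∇v‖² + ∫_Ω v² = ∫_Ω g(u) v` coming from `−Δv + v = g(u)` with
`λ₁ ≤ g(s) ≤ λ₂ (1+s)^β`, `0 ≤ β ≤ 1/2`, and `∫_Ω u = m`, then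
`∫_Ω ‖∇v‖² ≤ (λ₂²/4)(|Ω| + m)`. -/
theorem stmt_10 (Ω : Set (EuclideanSpace ℝ (Fin 2)))
    (hΩo : IsOpen Ω) (hΩb : Bornology.IsBounded Ω)
    (β lam₁ lam₂ : ℝ) (hβ0 : 0 ≤ β) (hβ : β ≤ 1 / 2)
    (hlam₁ : 0 < lam₁) (hlam : lam₁ ≤ lam₂)
    (g : ℝ → ℝ) (hg : ∀ s : ℝ, 0 ≤ s → lam₁ ≤ g s ∧ g s ≤ lam₂ * (1 + s) ^ β)
    (u : EuclideanSpace ℝ (Fin 2) → ℝ) (hu0 : ∀ x, 0 ≤ u x)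
    (hum : Measurable u) (hui : IntegrableOn u Ω)
    (m : ℝ) (hm : ∫ x in Ω, u x = m)
    (v : EuclideanSpace ℝ (Fin 2) → ℝ) (hv : Differentiable ℝ v)
    (hv2 : IntegrableOn (fun x => (v x) ^ 2) Ω)
    (hgrad2 : IntegrableOn (fun x => ‖fderiv ℝ v x‖ ^ 2) Ω)
    (hgv : IntegrableOn (fun x => g (u x) * v x) Ω)
    (hid : (∫ x in Ω, ‖fderiv ℝ v x‖ ^ 2) + ∫ x in Ω, (v x) ^ 2
            = ∫ x in Ω, g (u x) * v x) :
    ∫ x in Ω, ‖fderiv ℝ v x‖ ^ 2 ≤ (lam₂ ^ 2 / 4) * ((volume Ω).toReal + m) :=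
  stmt_10_general Ω hΩb β lam₁ lam₂ hβ hlam₁ g hg u hu0 hui m hm v hv2 hgv hid
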